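/- arXiv:1011.3887 — 3 statements merged into one kernel-verified Lean document; each statement's English description precedes it below -/
import Mathlib

section
/- Let α ∈ (1,2], let f belong to Co(α) with Taylor coefficients a₂, a₃, and let λ be a real number with λ ≤ 2(α−3)/(3(α−1)). Then |a₃ − λa₂²| ≤ (2α²+1)/3 − λα². -/
open Complex Metric

noncomputable section

/-- The open unit disk in ℂ. -/
def unitDisk : Set ℂ := ball 0 1

/-- φ is a (normalized) starlike univalent function on the unit disk. -/
def IsStarlike (φ : ℂ → ℂ) : Prop :=
  DifferentiableOn ℂ φ unitDisk ∧ φ 0 = 0 ∧ deriv φ 0 = 1 ∧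
    (∀ z ∈ unitDisk, z ≠ 0 → φ z ≠ 0) ∧
    ∀ z ∈ unitDisk, 0 < (z * deriv φ z / φ z).re

/-- The function P_f from the analytic characterization of Co(α). -/
def Pfun (α : ℝ) (f : ℂ → ℂ) (z : ℂ) : ℂ :=
  (2 / ((α : ℂ) - 1)) *
    (((α : ℂ) + 1) / 2 * ((1 + z) / (1 - z)) - 1 - z * deriv (deriv f) z / deriv f z)

/-- f belongs to the class Co(α) of concave univalent functions. -/
def IsConcaveUnivalent (α : ℝ) (f : ℂ → ℂ) : Prop :=
  DifferentiableOn ℂ f unitDisk ∧ f 0 = 0 ∧ deriv f 0 = 1 ∧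
    (∀ z ∈ unitDisk, deriv f z ≠ 0) ∧
    ∀ z ∈ unitDisk, 0 < (Pfun α f z).re

/-! Write `P = P_f` as `(1 + ω) / (1 - ω)` with a Schwarz function `ω z = z * ψ z`, and put
`c₁ = ψ 0`, `c₂ = ψ' 0`. Schwarz's lemma gives `‖ψ‖ ≤ 1`, and Schwarz–Pick at the origin gives
`‖c₂‖ ≤ 1 - ‖c₁‖²`. Comparing Taylor coefficients in `z f'' = g f'`, where
`g = ((α+1)/2)(1+z)/(1-z) - 1 - ((α-1)/2) P`, yields `2a₂ = (α+1) - (α-1)c₁` and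
`6a₃ = (α+1) - (α-1)(c₂ + c₁²) + 4a₂²`. Hence `a₃ - λa₂² = K₀ - K₁c₁ + K₂c₁² - K₃c₂` with real
`K₀, K₁, K₃ ≥ 0`, and the condition on `λ` is exactly `K₃ ≤ K₂`; the triangle inequality then
bounds the functional by `K₀ + K₁ + K₂ = (2α² + 1)/3 - λα²`. -/

open Filter Set Topology

open scoped ComplexConjugate

section SecondDerivative

variable {𝕜 : Type*} [NontriviallyNormedField 𝕜] {u v : 𝕜 → 𝕜} {x : 𝕜}

theorem DifferentiableAt.deriv_id_mul (hu : DifferentiableAt 𝕜 u x) :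
    deriv (fun z => z * u z) x = u x + x * deriv u x := by
  refine ((hasDerivAt_id' x).mul hu.hasDerivAt).deriv.trans ?_
  ring

theorem DifferentiableAt.deriv_linear_comb (hu : DifferentiableAt 𝕜 u x)
    (hv : DifferentiableAt 𝕜 v x) (a b c : 𝕜) :
    deriv (fun z => a * u z + b * v z + c) x = a * deriv u x + b * deriv v x :=
  (((hu.hasDerivAt.const_mul a).add (hv.hasDerivAt.const_mul b)).add_const c).deriv

variable [CompleteSpace 𝕜]

theorem AnalyticAt.deriv_deriv_mul (hu : AnalyticAt 𝕜 u x) (hv : AnalyticAt 𝕜 v x) :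
    deriv (deriv fun z => u z * v z) x
      = deriv (deriv u) x * v x + 2 * deriv u x * deriv v x + u x * deriv (deriv v) x := by
  have hderiv : deriv (fun z => u z * v z) =ᶠ[𝓝 x]
      fun z => deriv u z * v z + u z * deriv v z := by
    filter_upwards [hu.eventually_analyticAt, hv.eventually_analyticAt] with z hu hv
    exact deriv_fun_mul hu.differentiableAt hv.differentiableAt
  have hu' := hu.differentiableAt.hasDerivAt
  have hv' := hv.differentiableAt.hasDerivAt
  rw [hderiv.deriv_eq]
  refine ((hu.deriv.differentiableAt.hasDerivAt.mul hv').add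
    (hu'.mul hv.deriv.differentiableAt.hasDerivAt)).deriv.trans ?_
  ring

theorem AnalyticAt.deriv_deriv_id_mul (hu : AnalyticAt 𝕜 u x) :
    deriv (deriv fun z => z * u z) x = 2 * deriv u x + x * deriv (deriv u) x := by
  rw [(analyticAt_id (𝕜 := 𝕜)).deriv_deriv_mul (u := fun z => z) hu, deriv_id'']
  simp

theorem AnalyticAt.deriv_deriv_linear_comb (hu : AnalyticAt 𝕜 u x) (hv : AnalyticAt 𝕜 v x)
    (a b c : 𝕜) :
    deriv (deriv fun z => a * u z + b * v z + c) x
      = a * deriv (deriv u) x + b * deriv (deriv v) x := by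
  have hderiv : deriv (fun z => a * u z + b * v z + c) =ᶠ[𝓝 x]
      fun z => a * deriv u z + b * deriv v z + 0 := by
    filter_upwards [hu.eventually_analyticAt, hv.eventually_analyticAt] with z hu hv
    simpa using hu.differentiableAt.deriv_linear_comb hv.differentiableAt a b c
  rw [hderiv.deriv_eq, hu.deriv.differentiableAt.deriv_linear_comb hv.deriv.differentiableAt]

theorem deriv_of_mul_one_sub_eq_one_add {P ω : 𝕜 → 𝕜} (hP : AnalyticAt 𝕜 P 0)
    (hω : AnalyticAt 𝕜 ω 0) (hω0 : ω 0 = 0)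
    (hPω : (fun z => P z * (1 - ω z)) =ᶠ[𝓝 0] fun z => 1 + ω z) :
    deriv P 0 = 2 * deriv ω 0 ∧
      deriv (deriv P) 0 = 2 * deriv (deriv ω) 0 + 4 * deriv ω 0 ^ 2 := by
  have hP0 : P 0 = 1 := by simpa [hω0] using hPω.eq_of_nhds
  have hsub : AnalyticAt 𝕜 (fun z => 1 - ω z) 0 := analyticAt_const.sub hω
  have h1 := hPω.deriv_eq
  have h2 := hPω.deriv.deriv_eq
  rw [deriv_fun_mul hP.differentiableAt hsub.differentiableAt, deriv_const_sub,
    deriv_const_add] at h1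
  rw [hP.deriv_deriv_mul hsub, deriv_const_sub, deriv_const_sub', deriv_const_add',
    deriv.fun_neg] at h2
  simp only [hP0, hω0, sub_zero] at h1 h2
  constructor
  · linear_combination h1
  · linear_combination h2 + 2 * deriv ω 0 * h1

theorem deriv_mul_deriv_div_self {h : 𝕜 → 𝕜} (hh : AnalyticAt 𝕜 h 0) (h0 : h 0 = 1) :
    deriv (fun z => z * deriv h z / h z) 0 = deriv h 0 ∧
      deriv (deriv fun z => z * deriv h z / h z) 0
        = 2 * deriv (deriv h) 0 - 2 * deriv h 0 ^ 2 := by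
  set g := fun z => z * deriv h z / h z
  have hg : AnalyticAt 𝕜 g 0 := (analyticAt_id.mul hh.deriv).div hh (by simp [h0])
  have hgh : (fun z => z * deriv h z) =ᶠ[𝓝 0] fun z => g z * h z := by
    filter_upwards [hh.continuousAt.eventually_ne (h0 ▸ one_ne_zero)] with z hz
    exact (div_mul_cancel₀ _ hz).symm
  have h1 := hgh.deriv_eq
  have h2 := hgh.deriv.deriv_eq
  rw [hh.deriv.differentiableAt.deriv_id_mul, deriv_fun_mul hg.differentiableAt
    hh.differentiableAt] at h1
  rw [hh.deriv.deriv_deriv_id_mul, hg.deriv_deriv_mul hh] at h2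
  simp only [g, h0, zero_mul, zero_div, mul_one, add_zero] at h1 h2
  constructor
  · exact h1.symm
  · linear_combination -h2 + 2 * deriv h 0 * h1

end SecondDerivative

theorem Complex.norm_sub_le_norm_one_sub_conj_mul {a w : ℂ} (ha : ‖a‖ ≤ 1) (hw : ‖w‖ ≤ 1) :
    ‖w - a‖ ≤ ‖1 - conj a * w‖ := by
  have key : normSq (1 - conj a * w) - normSq (w - a) = (1 - normSq a) * (1 - normSq w) := by
    simp only [normSq_apply, mul_re, mul_im, conj_re, conj_im, sub_re, sub_im, one_re, one_im]
    ring
  rw [← sq_le_sq₀ (norm_nonneg _) (norm_nonneg _), Complex.sq_norm, Complex.sq_norm]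
  have ha' : normSq a ≤ 1 := by rw [← Complex.sq_norm]; nlinarith [norm_nonneg a]
  have hw' : normSq w ≤ 1 := by rw [← Complex.sq_norm]; nlinarith [norm_nonneg w]
  nlinarith [mul_nonneg (sub_nonneg.2 ha') (sub_nonneg.2 hw')]

theorem Complex.norm_deriv_le_one_sub_sq {ψ : ℂ → ℂ} (hψ : DifferentiableOn ℂ ψ (ball 0 1))
    (hmaps : MapsTo ψ (ball 0 1) (closedBall 0 1)) : ‖deriv ψ 0‖ ≤ 1 - ‖ψ 0‖ ^ 2 := by
  have h0 : (0 : ℂ) ∈ ball 0 1 := mem_ball_self one_pos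
  have hnorm : ∀ z ∈ ball (0 : ℂ) 1, ‖ψ z‖ ≤ 1 := fun z hz => by
    simpa using hmaps hz
  rcases (hnorm 0 h0).eq_or_lt with hψ0 | hψ0
  · have hmax : IsMaxOn (norm ∘ ψ) (ball 0 1) 0 := fun z hz => by
      simpa [hψ0] using hnorm z hz
    have hconst : ψ =ᶠ[𝓝 0] fun _ => ψ 0 :=
      eventually_of_mem (ball_mem_nhds 0 one_pos) fun z hz =>
        eqOn_of_isPreconnected_of_isMaxOn_norm (convex_ball 0 1).isPreconnected isOpen_ball
          hψ h0 hmax hz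
    simp [hconst.deriv_eq, hψ0]
  · set a := ψ 0
    have hden : ∀ z ∈ ball (0 : ℂ) 1, 1 - conj a * ψ z ≠ 0 := fun z hz h => by
      have : ‖conj a * ψ z‖ < 1 := by
        rw [norm_mul, RCLike.norm_conj]
        nlinarith [mul_le_mul_of_nonneg_left (hnorm z hz) (norm_nonneg a)]
      simp [← sub_eq_zero.1 h] at this
    set Φ := fun z => (ψ z - a) / (1 - conj a * ψ z)
    have hΦ : DifferentiableOn ℂ Φ (ball 0 1) := fun z hz =>
      ((hψ z hz).sub_const a).div ((hψ z hz).const_mul _ |>.const_sub 1) (hden z hz)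
    have hΦmaps : MapsTo Φ (ball 0 1) (closedBall (Φ 0) 1) := fun z hz => by
      simp only [Φ, a, sub_self, zero_div, mem_closedBall_zero_iff, norm_div]
      exact div_le_one_of_le₀ (norm_sub_le_norm_one_sub_conj_mul hψ0.le (hnorm z hz))
        (norm_nonneg _)
    have hpos : 0 < 1 - ‖a‖ ^ 2 := by nlinarith [norm_nonneg a]
    have hΦ' : HasDerivAt Φ (deriv ψ 0 / (1 - conj a * a)) 0 := by
      have hψ' := (hψ.differentiableAt (ball_mem_nhds 0 one_pos)).hasDerivAt
      refine ((hψ'.sub_const a).div ((hψ'.const_mul (conj a)).const_sub 1)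
        (hden 0 h0)).congr_deriv ?_
      rw [sub_self, zero_mul, sub_zero, sq, mul_div_mul_right _ _ (hden 0 h0)]
    have hd : (1 : ℂ) - conj a * a = ((1 - ‖a‖ ^ 2 : ℝ) : ℂ) := by
      rw [mul_comm, mul_conj, normSq_eq_norm_sq]; push_cast; ring
    have := norm_deriv_le_one_of_mapsTo_ball hΦ hΦmaps one_pos
    rwa [hΦ'.deriv, hd, norm_div, norm_real, Real.norm_of_nonneg hpos.le, div_le_one hpos] at this

theorem Complex.norm_sub_one_lt_norm_add_one {w : ℂ} (hw : 0 < w.re) : ‖w - 1‖ < ‖w + 1‖ := by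
  rw [← sq_lt_sq₀ (norm_nonneg _) (norm_nonneg _), Complex.sq_norm, Complex.sq_norm]
  simp only [normSq_apply, sub_re, sub_im, add_re, add_im, one_re, one_im]
  nlinarith

theorem Complex.exists_deriv_eq_of_re_pos {P : ℂ → ℂ} (hP : DifferentiableOn ℂ P (ball 0 1))
    (hre : ∀ z ∈ ball (0 : ℂ) 1, 0 < (P z).re) (hP0 : P 0 = 1) :
    ∃ c₁ c₂ : ℂ, ‖c₂‖ ≤ 1 - ‖c₁‖ ^ 2 ∧ deriv P 0 = 2 * c₁ ∧
      deriv (deriv P) 0 = 4 * c₂ + 4 * c₁ ^ 2 := by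
  have hball : ball (0 : ℂ) 1 ∈ 𝓝 0 := ball_mem_nhds 0 one_pos
  have hPA : AnalyticOnNhd ℂ P (ball 0 1) := hP.analyticOnNhd isOpen_ball
  have hne : ∀ z ∈ ball (0 : ℂ) 1, P z + 1 ≠ 0 := fun z hz h => by
    have := hre z hz
    rw [eq_neg_of_add_eq_zero_left h] at this
    norm_num at this
  -- `ω` is the Schwarz function of `P`, and `ψ = ω / z`
  set ω := fun z => (P z - 1) / (P z + 1)
  have hωA : AnalyticOnNhd ℂ ω (ball 0 1) := fun z hz =>
    ((hPA z hz).sub analyticAt_const).div ((hPA z hz).add analyticAt_const) (hne z hz)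
  have hω0 : ω 0 = 0 := by simp [ω, hP0]
  have hωmaps : MapsTo ω (ball 0 1) (closedBall (ω 0) 1) := fun z hz => by
    rw [hω0, mem_closedBall_zero_iff, norm_div]
    exact div_le_one_of_le₀ (norm_sub_one_lt_norm_add_one (hre z hz)).le (norm_nonneg _)
  set ψ := dslope ω 0
  have hψ : DifferentiableOn ℂ ψ (ball 0 1) :=
    (differentiableOn_dslope hball).2 hωA.differentiableOn
  have hψA : AnalyticAt ℂ ψ 0 := hψ.analyticAt hball
  have hωψ : ω = fun z => z * ψ z := funext fun z => by
    simpa [hω0] using (sub_smul_dslope ω 0 z).symm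
  have hψmaps : MapsTo ψ (ball 0 1) (closedBall 0 1) := fun z hz => by
    simpa using norm_dslope_le_div_of_mapsTo_ball hωA.differentiableOn hωmaps hz
  have hPω : (fun z => P z * (1 - ω z)) =ᶠ[𝓝 0] fun z => 1 + ω z := by
    filter_upwards [hball] with z hz
    simp only [ω]
    field_simp [hne z hz]
    ring
  obtain ⟨h1, h2⟩ := deriv_of_mul_one_sub_eq_one_add (hPA 0 (mem_ball_self one_pos))
    (hωA 0 (mem_ball_self one_pos)) hω0 hPω
  rw [hωψ, hψA.differentiableAt.deriv_id_mul] at h1 h2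
  rw [hψA.deriv_deriv_id_mul] at h2
  refine ⟨ψ 0, deriv ψ 0, norm_deriv_le_one_sub_sq hψ hψmaps, ?_, ?_⟩
  · simpa using h1
  · rw [h2]
    ring

theorem norm_sub_mul_add_mul_sq_sub_mul_le {K₀ K₁ K₂ K₃ : ℝ} (h₀ : 0 ≤ K₀) (h₁ : 0 ≤ K₁)
    (h₃ : 0 ≤ K₃) (h₃₂ : K₃ ≤ K₂) {c₁ c₂ : ℂ} (hc : ‖c₂‖ ≤ 1 - ‖c₁‖ ^ 2) :
    ‖(K₀ : ℂ) - K₁ * c₁ + K₂ * c₁ ^ 2 - K₃ * c₂‖ ≤ K₀ + K₁ + K₂ := by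
  have hc₁ : ‖c₁‖ ≤ 1 := by nlinarith [norm_nonneg c₁, norm_nonneg c₂]
  calc ‖(K₀ : ℂ) - K₁ * c₁ + K₂ * c₁ ^ 2 - K₃ * c₂‖
      ≤ ‖(K₀ : ℂ)‖ + ‖(K₁ : ℂ) * c₁‖ + ‖(K₂ : ℂ) * c₁ ^ 2‖ + ‖(K₃ : ℂ) * c₂‖ :=
        (norm_sub_le _ _).trans <| add_le_add_left
          ((norm_add_le _ _).trans (add_le_add_left (norm_sub_le _ _) _)) _
    _ = K₀ + K₁ * ‖c₁‖ + K₂ * ‖c₁‖ ^ 2 + K₃ * ‖c₂‖ := by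
        simp only [norm_mul, norm_pow, norm_real, Real.norm_of_nonneg, h₀, h₁, h₃,
          h₃.trans h₃₂]
    _ ≤ K₀ + K₁ + K₂ := by
        nlinarith [mul_le_mul_of_nonneg_left hc h₃, mul_le_of_le_one_right h₁ hc₁,
          mul_nonneg (sub_nonneg.2 h₃₂) (sub_nonneg.2 (pow_le_one₀ (n := 2) (norm_nonneg c₁) hc₁))]

theorem norm_coeff_sub_mul_sq_le {α lam : ℝ} (hα : 1 < α)
    (hlam : lam ≤ 2 * (α - 3) / (3 * (α - 1))) {c₁ c₂ : ℂ} (hc : ‖c₂‖ ≤ 1 - ‖c₁‖ ^ 2) :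
    ‖((α + 1) - (α - 1) * (c₂ + c₁ ^ 2) + ((α + 1) - (α - 1) * c₁) ^ 2) / 6
        - (lam : ℂ) * (((α + 1) - (α - 1) * c₁) / 2) ^ 2‖
      ≤ (2 * α ^ 2 + 1) / 3 - lam * α ^ 2 := by
  have hα₁ : 0 < α - 1 := sub_pos.2 hα
  -- the coefficient of `((α + 1) - (α - 1) * c₁) ^ 2`, i.e. of `(2 a₂) ^ 2`
  set τ := 1 / 6 - lam / 4
  have hτ : 1 / 3 ≤ τ * (α - 1) := by
    rw [le_div_iff₀ (by positivity)] at hlam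
    simp only [τ]
    nlinarith
  have hτpos : 0 < τ := by nlinarith
  have hbound := norm_sub_mul_add_mul_sq_sub_mul_le (K₀ := τ * (α + 1) ^ 2 + (α + 1) / 6)
    (K₁ := 2 * τ * (α + 1) * (α - 1)) (K₂ := (α - 1) * (τ * (α - 1) - 1 / 6))
    (K₃ := (α - 1) / 6) (by positivity) (by nlinarith [mul_pos hτpos hα₁]) (by positivity)
    (by nlinarith) hc
  convert hbound using 2
  · simp only [τ]; push_cast; ring
  · simp only [τ]; ring

theorem Pfun_zero {α : ℝ} (hα : (α : ℂ) ≠ 1) (f : ℂ → ℂ) : Pfun α f 0 = 1 := by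
  have : (α : ℂ) - 1 ≠ 0 := sub_ne_zero.2 hα
  simp only [Pfun]
  field_simp
  ring

theorem mul_deriv_deriv_div_deriv_eq {α : ℝ} (hα : (α : ℂ) ≠ 1) (f : ℂ → ℂ) :
    (fun z => z * deriv (deriv f) z / deriv f z)
      = fun z => ((α : ℂ) + 1) / 2 * ((1 + z) / (1 - z)) + (-((α : ℂ) - 1) / 2) * Pfun α f z
        + -1 := by
  have : (α : ℂ) - 1 ≠ 0 := sub_ne_zero.2 hα
  funext z
  simp only [Pfun]
  field_simp
  ring

theorem analyticAt_one_add_div_one_sub {z : ℂ} (hz : z ≠ 1) :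
    AnalyticAt ℂ (fun w : ℂ => (1 + w) / (1 - w)) z :=
  (analyticAt_const.add analyticAt_id).div (analyticAt_const.sub analyticAt_id)
    (sub_ne_zero.2 hz.symm)

theorem deriv_one_add_div_one_sub :
    deriv (fun z : ℂ => (1 + z) / (1 - z)) 0 = 2 ∧
      deriv (deriv fun z : ℂ => (1 + z) / (1 - z)) 0 = 4 := by
  have hrel : (fun z : ℂ => (1 + z) / (1 - z) * (1 - z)) =ᶠ[𝓝 0] fun z => 1 + z := by
    filter_upwards [continuousAt_id.eventually_ne (one_ne_zero (α := ℂ)).symm] with z hz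
    exact div_mul_cancel₀ _ (sub_ne_zero.2 hz.symm)
  obtain ⟨h1, h2⟩ := deriv_of_mul_one_sub_eq_one_add
    (analyticAt_one_add_div_one_sub zero_ne_one) analyticAt_id rfl hrel
  exact ⟨by simpa using h1, by simpa using h2⟩

theorem IsConcaveUnivalent.analyticOnNhd_Pfun {α : ℝ} {f : ℂ → ℂ} (hf : IsConcaveUnivalent α f) :
    AnalyticOnNhd ℂ (Pfun α f) unitDisk := fun z hz => by
  have hfA : AnalyticOnNhd ℂ f unitDisk := hf.1.analyticOnNhd isOpen_ball
  have hz1 : z ≠ 1 := fun h => by simp [h, unitDisk] at hz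
  exact analyticAt_const.mul
    (((analyticAt_const.mul (analyticAt_one_add_div_one_sub hz1)).sub analyticAt_const).sub
      ((analyticAt_id.mul (hfA.deriv.deriv z hz)).div (hfA.deriv z hz) (hf.2.2.2.1 z hz)))

theorem IsConcaveUnivalent.deriv_deriv_eq {α : ℝ} (hα : (α : ℂ) ≠ 1) {f : ℂ → ℂ}
    (hf : IsConcaveUnivalent α f) :
    deriv (deriv f) 0 = (α + 1) - (α - 1) / 2 * deriv (Pfun α f) 0 ∧
      deriv (deriv (deriv f)) 0
        = (α + 1) - (α - 1) / 4 * deriv (deriv (Pfun α f)) 0 + deriv (deriv f) 0 ^ 2 := by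
  have h0 : (0 : ℂ) ∈ unitDisk := mem_ball_self one_pos
  obtain ⟨hg1, hg2⟩ := deriv_mul_deriv_div_self
    ((hf.1.analyticOnNhd isOpen_ball).deriv 0 h0) hf.2.2.1
  have hm := analyticAt_one_add_div_one_sub zero_ne_one
  have hP := hf.analyticOnNhd_Pfun 0 h0
  rw [mul_deriv_deriv_div_deriv_eq hα, hm.differentiableAt.deriv_linear_comb
    hP.differentiableAt] at hg1
  rw [mul_deriv_deriv_div_deriv_eq hα, hm.deriv_deriv_linear_comb hP] at hg2
  obtain ⟨hm1, hm2⟩ := deriv_one_add_div_one_sub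
  rw [hm1] at hg1
  rw [hm2] at hg2
  constructor
  · linear_combination -hg1
  · linear_combination -hg2 / 2

theorem stmt4 (α : ℝ) (hα : 1 < α ∧ α ≤ 2) (f : ℂ → ℂ)
    (hf : IsConcaveUnivalent α f) (lam : ℝ)
    (hlam : lam ≤ 2 * (α - 3) / (3 * (α - 1))) :
    ‖iteratedDeriv 3 f 0 / 6 - (lam : ℂ) * (iteratedDeriv 2 f 0 / 2) ^ 2‖
      ≤ (2 * α ^ 2 + 1) / 3 - lam * α ^ 2 := by
  have hα₁ : (α : ℂ) ≠ 1 := by exact_mod_cast hα.1.ne'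
  obtain ⟨c₁, c₂, hc, hP₁, hP₂⟩ := exists_deriv_eq_of_re_pos
    hf.analyticOnNhd_Pfun.differentiableOn hf.2.2.2.2 (Pfun_zero hα₁ f)
  obtain ⟨hf₂, hf₃⟩ := hf.deriv_deriv_eq hα₁
  have ha₂ : deriv (deriv f) 0 = (α + 1) - (α - 1) * c₁ := by rw [hf₂, hP₁]; ring
  simp only [iteratedDeriv_succ, iteratedDeriv_zero]
  rw [hf₃, hP₂, ha₂]
  convert norm_coeff_sub_mul_sq_le hα.1 hlam hc using 3
  ring
end
end

section
/- Let α ∈ (1,2] and let f be the analytic function on 𝔻 with f(0) = 0 and f'(z) = (1+z)^{α−1}/(1−z)^{α+1} for z ∈ 𝔻 (principal branches of the powers; equivalently f(z) = (1/(2α))·[((1+z)/(1−z))^α − 1]). Then f belongs to Co(α), and its Taylor coefficients satisfy a₂ = α and a₃ = (2α²+1)/3; consequently |a₃ − λa₂²| = (2α²+1)/3 − λα² for every real λ ≤ 2(α−1)/(3α), and |a₃ − λa₂²| = λα² − (2α²+1)/3 for every real λ ≥ λ₂ = (4α² − 1 + √(8α²+1))/(6α²). -/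
open Complex Metric

noncomputable section

/-!
The extremal function of `Co(α)` is built so that its logarithmic derivative is explicit:
`f''/f' = (α - 1)/(1 + z) + (α + 1)/(1 - z)`. Substituting this into `P_f` collapses it to the
Cayley transform `(1 - z)/(1 + z)`, whose real part `(1 - |z|²)/|1 + z|²` is positive on the disk.
Differentiating `f'' = f' · (f''/f')` once more at `0` gives `a₂ = α` and `a₃ = (2α² + 1)/3`, so
`a₃ - λa₂²` is real and its sign is fixed on each of the two ranges of `λ`.
-/

lemma norm_lt_one_of_mem_unitDisk {z : ℂ} (hz : z ∈ unitDisk) : ‖z‖ < 1 := by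
  simpa [unitDisk] using hz

lemma one_sub_mem_slitPlane_of_norm_lt_one {z : ℂ} (hz : ‖z‖ < 1) : 1 - z ∈ slitPlane := by
  simpa [sub_eq_add_neg] using mem_slitPlane_of_norm_lt_one (z := -z) (by simpa using hz)

lemma re_one_sub_div_one_add_pos {z : ℂ} (hz : ‖z‖ < 1) : 0 < ((1 - z) / (1 + z)).re := by
  have hz₁ : 1 + z ≠ 0 := slitPlane_ne_zero (mem_slitPlane_of_norm_lt_one hz)
  have hsq : z.re * z.re + z.im * z.im < 1 := by
    rw [← normSq_apply, normSq_eq_norm_sq]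
    nlinarith [norm_nonneg z]
  rw [div_re, ← add_div]
  apply div_pos _ (normSq_pos.2 hz₁)
  simp only [sub_re, add_re, one_re, sub_im, add_im, one_im]
  nlinarith

def extremalDeriv (α : ℝ) (z : ℂ) : ℂ := (1 + z) ^ ((α : ℂ) - 1) / (1 - z) ^ ((α : ℂ) + 1)

def extremalLogDeriv (α : ℝ) (z : ℂ) : ℂ := ((α : ℂ) - 1) / (1 + z) + ((α : ℂ) + 1) / (1 - z)

section ExtremalDeriv

variable {α : ℝ} {z : ℂ}

lemma extremalDeriv_ne_zero (h₁ : 1 + z ≠ 0) (h₂ : 1 - z ≠ 0) : extremalDeriv α z ≠ 0 :=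
  div_ne_zero (cpow_ne_zero_iff.2 (.inl h₁)) (cpow_ne_zero_iff.2 (.inl h₂))

@[simp]
lemma extremalDeriv_zero : extremalDeriv α 0 = 1 := by
  simp [extremalDeriv]

@[simp]
lemma extremalLogDeriv_zero : extremalLogDeriv α 0 = 2 * α := by
  simp only [extremalLogDeriv, add_zero, sub_zero, div_one]
  ring

lemma hasDerivAt_extremalDeriv (h₁ : 1 + z ∈ slitPlane) (h₂ : 1 - z ∈ slitPlane) :
    HasDerivAt (extremalDeriv α) (extremalDeriv α z * extremalLogDeriv α z) z := by
  have hz₁ := slitPlane_ne_zero h₁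
  have hz₂ := slitPlane_ne_zero h₂
  have hnum := ((hasDerivAt_id z).const_add 1).cpow_const (c := (α : ℂ) - 1) h₁
  have hden := ((hasDerivAt_id z).const_sub 1).cpow_const (c := (α : ℂ) + 1) h₂
  have e₁ : (1 + z) ^ ((α : ℂ) - 1 - 1) = (1 + z) ^ ((α : ℂ) - 1) / (1 + z) := by
    rw [cpow_sub _ _ hz₁, cpow_one]
  have e₂ : (1 - z) ^ ((α : ℂ) + 1 - 1) = (1 - z) ^ ((α : ℂ) + 1) / (1 - z) := by
    rw [cpow_sub _ _ hz₂, cpow_one]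
  refine (hnum.div hden (cpow_ne_zero_iff.2 (.inl hz₂))).congr_deriv ?_
  simp only [id, e₁, e₂, extremalDeriv, extremalLogDeriv]
  field_simp
  ring

lemma hasDerivAt_extremalLogDeriv (h₁ : 1 + z ≠ 0) (h₂ : 1 - z ≠ 0) :
    HasDerivAt (extremalLogDeriv α)
      (((α : ℂ) + 1) / (1 - z) ^ 2 - ((α : ℂ) - 1) / (1 + z) ^ 2) z := by
  have : HasDerivAt (extremalLogDeriv α) _ z :=
    ((hasDerivAt_const z ((α : ℂ) - 1)).div ((hasDerivAt_id z).const_add 1) h₁).add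
      ((hasDerivAt_const z ((α : ℂ) + 1)).div ((hasDerivAt_id z).const_sub 1) h₂)
  refine this.congr_deriv ?_
  simp only [id]
  ring

end ExtremalDeriv

lemma pfun_eq_of_logDeriv {α : ℝ} {f : ℂ → ℂ} {z : ℂ} (hα : α ≠ 1) (h₁ : 1 + z ≠ 0)
    (h₂ : 1 - z ≠ 0) (hf' : deriv f z ≠ 0)
    (hlog : deriv (deriv f) z = deriv f z * extremalLogDeriv α z) :
    Pfun α f z = (1 - z) / (1 + z) := by
  have hα' : (α : ℂ) - 1 ≠ 0 := sub_ne_zero.2 (mod_cast hα)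
  rw [Pfun, hlog, mul_div_assoc, mul_div_cancel_left₀ _ hf', extremalLogDeriv]
  field_simp
  ring

section ExtremalFunction

variable {α : ℝ} {f : ℂ → ℂ}

lemma deriv_deriv_eq_of_deriv_eq_extremalDeriv
    (hf' : ∀ z ∈ unitDisk, deriv f z = extremalDeriv α z) {z : ℂ} (hz : z ∈ unitDisk) :
    deriv (deriv f) z = extremalDeriv α z * extremalLogDeriv α z := by
  have hz' := norm_lt_one_of_mem_unitDisk hz
  rw [(Filter.eventuallyEq_of_mem (Metric.isOpen_ball.mem_nhds hz) hf').deriv_eq,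
    (hasDerivAt_extremalDeriv (mem_slitPlane_of_norm_lt_one hz')
      (one_sub_mem_slitPlane_of_norm_lt_one hz')).deriv]

lemma iteratedDeriv_two_zero_of_deriv_eq_extremalDeriv
    (hf' : ∀ z ∈ unitDisk, deriv f z = extremalDeriv α z) : iteratedDeriv 2 f 0 = 2 * α := by
  have h0 : (0 : ℂ) ∈ unitDisk := Metric.mem_ball_self one_pos
  rw [iteratedDeriv_succ, iteratedDeriv_one, deriv_deriv_eq_of_deriv_eq_extremalDeriv hf' h0]
  simp

lemma iteratedDeriv_three_zero_of_deriv_eq_extremalDeriv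
    (hf' : ∀ z ∈ unitDisk, deriv f z = extremalDeriv α z) :
    iteratedDeriv 3 f 0 = 4 * (α : ℂ) ^ 2 + 2 := by
  have h0 : (0 : ℂ) ∈ unitDisk := Metric.mem_ball_self one_pos
  have h₁ : (1 : ℂ) + 0 ∈ slitPlane := by simp
  have h₂ : (1 : ℂ) - 0 ∈ slitPlane := by simp
  have hf'' : deriv (deriv f) =ᶠ[nhds 0] fun z ↦ extremalDeriv α z * extremalLogDeriv α z :=
    Filter.eventuallyEq_of_mem (Metric.isOpen_ball.mem_nhds h0)
      fun _ ↦ deriv_deriv_eq_of_deriv_eq_extremalDeriv hf'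
  have hmul : HasDerivAt (fun z ↦ extremalDeriv α z * extremalLogDeriv α z) _ 0 :=
    (hasDerivAt_extremalDeriv h₁ h₂).mul
      (hasDerivAt_extremalLogDeriv (slitPlane_ne_zero h₁) (slitPlane_ne_zero h₂))
  rw [iteratedDeriv_succ, iteratedDeriv_succ, iteratedDeriv_one, hf''.deriv_eq, hmul.deriv]
  simp only [extremalDeriv_zero, extremalLogDeriv_zero, add_zero, sub_zero, one_pow, div_one]
  ring

lemma isConcaveUnivalent_of_deriv_eq_extremalDeriv (hα : 1 < α)
    (hf' : ∀ z ∈ unitDisk, deriv f z = extremalDeriv α z)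
    (hf : DifferentiableOn ℂ f unitDisk) (hf0 : f 0 = 0) : IsConcaveUnivalent α f := by
  have h0 : (0 : ℂ) ∈ unitDisk := Metric.mem_ball_self one_pos
  have hne : ∀ z ∈ unitDisk, 1 + z ≠ 0 ∧ 1 - z ≠ 0 := fun z hz ↦
    ⟨slitPlane_ne_zero (mem_slitPlane_of_norm_lt_one (norm_lt_one_of_mem_unitDisk hz)),
      slitPlane_ne_zero (one_sub_mem_slitPlane_of_norm_lt_one (norm_lt_one_of_mem_unitDisk hz))⟩
  have hf'_ne : ∀ z ∈ unitDisk, deriv f z ≠ 0 := fun z hz ↦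
    hf' z hz ▸ extremalDeriv_ne_zero (hne z hz).1 (hne z hz).2
  refine ⟨hf, hf0, by simp [hf' 0 h0], hf'_ne, fun z hz ↦ ?_⟩
  have hlog : deriv (deriv f) z = deriv f z * extremalLogDeriv α z := by
    rw [deriv_deriv_eq_of_deriv_eq_extremalDeriv hf' hz, hf' z hz]
  rw [pfun_eq_of_logDeriv hα.ne' (hne z hz).1 (hne z hz).2 (hf'_ne z hz) hlog]
  exact re_one_sub_div_one_add_pos (norm_lt_one_of_mem_unitDisk hz)

end ExtremalFunction

lemma mul_sq_le_of_le_two_mul_sub_one_div {α lam : ℝ} (hα : 0 < α)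
    (hlam : lam ≤ 2 * (α - 1) / (3 * α)) : lam * α ^ 2 ≤ (2 * α ^ 2 + 1) / 3 := by
  rw [le_div_iff₀ (by positivity)] at hlam
  nlinarith [mul_le_mul_of_nonneg_right hlam hα.le]

lemma le_mul_sq_of_four_mul_sq_sub_one_add_sqrt_div_le {α lam : ℝ} (hα : 1 ≤ α)
    (hlam : (4 * α ^ 2 - 1 + Real.sqrt (8 * α ^ 2 + 1)) / (6 * α ^ 2) ≤ lam) :
    (2 * α ^ 2 + 1) / 3 ≤ lam * α ^ 2 := by
  have hsqrt : 3 ≤ Real.sqrt (8 * α ^ 2 + 1) :=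
    Real.le_sqrt_of_sq_le (by nlinarith)
  rw [div_le_iff₀ (by positivity)] at hlam
  linarith

theorem stmt11 (α : ℝ) (hα : 1 < α ∧ α ≤ 2) (f : ℂ → ℂ)
    (hf : DifferentiableOn ℂ f unitDisk) (hf0 : f 0 = 0)
    (hf' : ∀ z ∈ unitDisk,
      deriv f z = (1 + z) ^ ((α : ℂ) - 1) / (1 - z) ^ ((α : ℂ) + 1)) :
    IsConcaveUnivalent α f ∧
    iteratedDeriv 2 f 0 / 2 = (α : ℂ) ∧
    iteratedDeriv 3 f 0 / 6 = (2 * (α : ℂ) ^ 2 + 1) / 3 ∧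
    (∀ lam : ℝ, lam ≤ 2 * (α - 1) / (3 * α) →
      ‖iteratedDeriv 3 f 0 / 6 - (lam : ℂ) * (iteratedDeriv 2 f 0 / 2) ^ 2‖
        = (2 * α ^ 2 + 1) / 3 - lam * α ^ 2) ∧
    (∀ lam : ℝ, (4 * α ^ 2 - 1 + Real.sqrt (8 * α ^ 2 + 1)) / (6 * α ^ 2) ≤ lam →
      ‖iteratedDeriv 3 f 0 / 6 - (lam : ℂ) * (iteratedDeriv 2 f 0 / 2) ^ 2‖
        = lam * α ^ 2 - (2 * α ^ 2 + 1) / 3) := by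
  obtain ⟨hα₁, -⟩ := hα
  have ha₂ : iteratedDeriv 2 f 0 / 2 = α := by
    rw [iteratedDeriv_two_zero_of_deriv_eq_extremalDeriv hf']
    ring
  have ha₃ : iteratedDeriv 3 f 0 / 6 = (2 * (α : ℂ) ^ 2 + 1) / 3 := by
    rw [iteratedDeriv_three_zero_of_deriv_eq_extremalDeriv hf']
    ring
  have hfs : ∀ lam : ℝ, ‖iteratedDeriv 3 f 0 / 6 - (lam : ℂ) * (iteratedDeriv 2 f 0 / 2) ^ 2‖
      = |(2 * α ^ 2 + 1) / 3 - lam * α ^ 2| := fun lam ↦ by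
    rw [ha₂, ha₃, ← Real.norm_eq_abs, ← norm_real]
    push_cast
    rfl
  refine ⟨isConcaveUnivalent_of_deriv_eq_extremalDeriv hα₁ hf' hf hf0, ha₂, ha₃,
    fun lam hlam ↦ ?_, fun lam hlam ↦ ?_⟩
  · have hle := mul_sq_le_of_le_two_mul_sub_one_div (by linarith) hlam
    rw [hfs, abs_of_nonneg (sub_nonneg.2 hle)]
  · have hle := le_mul_sq_of_four_mul_sq_sub_one_add_sqrt_div_le hα₁.le hlam
    rw [hfs, abs_of_nonpos (sub_nonpos.2 hle), neg_sub]
end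
end

section
/- Let α ∈ (1,2]. Then there exists a function f belonging to Co(α) whose Taylor coefficients satisfy |a₃ − (2/3)·a₂²| = α/3; that is, the bound α/3 in the Fekete–Szegő inequality for Co(α) at λ = 2/3 is sharp. -/
open Complex Metric

noncomputable section

/-!
For `‖c‖ ≤ 1`, `c ≠ 1`, let `f(0) = 0` and `f' = (1 - c z)^(α-1) (1 - z)^(-α-1)`. Its logarithmic
derivative `q = f''/f' = -(α-1) c/(1 - c z) + (α+1)/(1 - z)` makes `P_f = (1 + c z)/(1 - c z)`,
which has positive real part on the disk. Since `f''(0) = q(0)` and `f'''(0) = q(0)² + q'(0)`, the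
functional `a₃ - (2/3) a₂²` equals `q'(0)/6 = (α + 1 - (α - 1) c²)/6`, which is `α/3` for `c = i`.

Both powers have bases of positive real part on the disk, so principal-branch powers are
holomorphic there; this is why `f` is written with two factors rather than as a power of the
Möbius map `(1 - c z)/(1 - z)`.
-/

open Filter Topology

section

variable {c z : ℂ}

lemma one_sub_mem_slitPlane (hz : ‖z‖ < 1) : 1 - z ∈ slitPlane := by
  simpa [sub_eq_add_neg] using mem_slitPlane_of_norm_lt_one (z := -z) (by simpa using hz)

lemma one_sub_ne_zero_of_norm_lt_one (hz : ‖z‖ < 1) : 1 - z ≠ 0 :=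
  slitPlane_ne_zero (one_sub_mem_slitPlane hz)

lemma re_one_add_div_one_sub_pos (hz : ‖z‖ < 1) : 0 < ((1 + z) / (1 - z)).re := by
  have hre : ((1 + z) / (1 - z)).re = (1 - ‖z‖ ^ 2) / normSq (1 - z) := by
    rw [div_re, ← add_div, ← normSq_eq_norm_sq]
    congr 1
    simp only [normSq_apply, add_re, add_im, sub_re, sub_im, one_re, one_im]
    ring
  rw [hre]
  exact div_pos (by nlinarith [norm_nonneg z])
    (normSq_pos.2 (one_sub_ne_zero_of_norm_lt_one hz))

lemma norm_mul_lt_one_of_le_of_lt (hc : ‖c‖ ≤ 1) (hz : ‖z‖ < 1) : ‖c * z‖ < 1 :=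
  (norm_mul_le c z).trans_lt (mul_lt_one_of_nonneg_of_lt_one_right hc (norm_nonneg z) hz)

end

def powProd (a b c z : ℂ) : ℂ := (1 - c * z) ^ a * (1 - z) ^ b

def powProdLogDeriv (a b c z : ℂ) : ℂ := -(a * c) / (1 - c * z) - b / (1 - z)

section

variable {a b c z : ℂ} (hc : ‖c‖ ≤ 1) (hz : ‖z‖ < 1)
include hc hz

lemma powProd_ne_zero : powProd a b c z ≠ 0 := by
  have hcz := one_sub_ne_zero_of_norm_lt_one (norm_mul_lt_one_of_le_of_lt hc hz)
  have h1z := one_sub_ne_zero_of_norm_lt_one hz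
  exact mul_ne_zero (fun h => hcz ((cpow_eq_zero_iff _ _).1 h).1)
    (fun h => h1z ((cpow_eq_zero_iff _ _).1 h).1)

lemma powProd_add_one :
    powProd (a + 1) (b + 1) c z = powProd a b c z * ((1 - c * z) * (1 - z)) := by
  have hcz := one_sub_ne_zero_of_norm_lt_one (norm_mul_lt_one_of_le_of_lt hc hz)
  have h1z := one_sub_ne_zero_of_norm_lt_one hz
  simp only [powProd, cpow_add _ _ hcz, cpow_add _ _ h1z, cpow_one]
  ring

lemma hasDerivAt_powProd :
    HasDerivAt (powProd a b c) (powProd a b c z * powProdLogDeriv a b c z) z := by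
  have hcz' := norm_mul_lt_one_of_le_of_lt hc hz
  have hcz := one_sub_ne_zero_of_norm_lt_one hcz'
  have h1z := one_sub_ne_zero_of_norm_lt_one hz
  have hlin (d : ℂ) : HasDerivAt (fun w => 1 - d * w) (-d) z := by
    simpa using ((hasDerivAt_id z).const_mul d).const_sub 1
  have h1 : HasDerivAt (fun w => 1 - w) (-1) z := by simpa using hlin 1
  refine (((hlin c).cpow_const (c := a) (one_sub_mem_slitPlane hcz')).mul
    (h1.cpow_const (c := b) (one_sub_mem_slitPlane hz))).congr_deriv ?_
  simp only [powProd, powProdLogDeriv, cpow_sub _ _ hcz, cpow_sub _ _ h1z, cpow_one]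
  field_simp
  ring

end

lemma hasDerivAt_powProdLogDeriv_zero (a b c : ℂ) :
    HasDerivAt (powProdLogDeriv a b c) (-(a * c ^ 2) - b) 0 := by
  have hlin (d : ℂ) : HasDerivAt (fun w => 1 - d * w) (-d) 0 := by
    simpa using ((hasDerivAt_id (0 : ℂ)).const_mul d).const_sub 1
  have h1 : HasDerivAt (fun w : ℂ => 1 - w) (-1) 0 := by simpa using hlin 1
  refine (((hasDerivAt_const 0 (-(a * c))).div (hlin c) (by simp)).sub
    ((hasDerivAt_const 0 b).div h1 (by simp))).congr_deriv ?_
  simp only [mul_zero, sub_zero, zero_mul, one_pow, div_one, zero_sub]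
  ring

lemma feketeSzego_two_thirds_eq {f q : ℂ → ℂ} {q' : ℂ}
    (hf : ∀ᶠ z in 𝓝 0, HasDerivAt (deriv f) (deriv f z * q z) z) (hf0 : deriv f 0 = 1)
    (hq : HasDerivAt q q' 0) :
    iteratedDeriv 3 f 0 / 6 - (2 / 3 : ℂ) * (iteratedDeriv 2 f 0 / 2) ^ 2 = q' / 6 := by
  have hf2 : deriv (deriv f) =ᶠ[𝓝 0] fun z => deriv f z * q z :=
    hf.mono fun z hz => hz.deriv
  have h2 : iteratedDeriv 2 f 0 = q 0 := by
    rw [iteratedDeriv_succ, iteratedDeriv_one, hf2.eq_of_nhds, hf0, one_mul]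
  have h3 : iteratedDeriv 3 f 0 = q 0 ^ 2 + q' := by
    rw [iteratedDeriv_succ, iteratedDeriv_succ, iteratedDeriv_one, hf2.deriv_eq,
      (hf.self_of_nhds.fun_mul hq).deriv, hf0]
    ring
  rw [h2, h3]
  ring

def concaveExtremal (α : ℝ) (c z : ℂ) : ℂ :=
  (powProd α (-α) c z - 1) / (α * (1 - c))

section

variable {α : ℝ} {c : ℂ} (hc : ‖c‖ ≤ 1) (hc1 : c ≠ 1)
include hc hc1

lemma hasDerivAt_concaveExtremal (hα : α ≠ 0) {z : ℂ} (hz : ‖z‖ < 1) :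
    HasDerivAt (concaveExtremal α c) (powProd (α - 1) (-α - 1) c z) z := by
  refine (((hasDerivAt_powProd hc hz).sub_const 1).div_const _).congr_deriv ?_
  have hshift := powProd_add_one (a := α - 1) (b := -α - 1) hc hz
  rw [sub_add_cancel, show -(α : ℂ) - 1 + 1 = -α by ring] at hshift
  have hα' : (α : ℂ) ≠ 0 := ofReal_ne_zero.2 hα
  have hc1' : 1 - c ≠ 0 := sub_ne_zero.2 hc1.symm
  have hcz := one_sub_ne_zero_of_norm_lt_one (norm_mul_lt_one_of_le_of_lt hc hz)
  have h1z := one_sub_ne_zero_of_norm_lt_one hz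
  rw [hshift, powProdLogDeriv]
  field_simp
  ring

lemma deriv_concaveExtremal_eventuallyEq (hα : α ≠ 0) {z : ℂ} (hz : ‖z‖ < 1) :
    deriv (concaveExtremal α c) =ᶠ[𝓝 z] powProd (α - 1) (-α - 1) c := by
  filter_upwards [isOpen_ball.mem_nhds (mem_ball_zero_iff.2 hz)] with w hw
  exact (hasDerivAt_concaveExtremal hc hc1 hα (mem_ball_zero_iff.1 hw)).deriv

lemma hasDerivAt_deriv_concaveExtremal (hα : α ≠ 0) {z : ℂ} (hz : ‖z‖ < 1) :
    HasDerivAt (deriv (concaveExtremal α c))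
      (deriv (concaveExtremal α c) z * powProdLogDeriv (α - 1) (-α - 1) c z) z := by
  have h := deriv_concaveExtremal_eventuallyEq hc hc1 hα hz
  rw [h.eq_of_nhds]
  exact (hasDerivAt_powProd hc hz).congr_of_eventuallyEq h

lemma pfun_concaveExtremal (hα : 1 < α) {z : ℂ} (hz : ‖z‖ < 1) :
    Pfun α (concaveExtremal α c) z = (1 + c * z) / (1 - c * z) := by
  have hα0 : α ≠ 0 := (zero_lt_one.trans hα).ne'
  have hα1 : (α : ℂ) - 1 ≠ 0 := by exact_mod_cast sub_ne_zero.2 hα.ne'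
  have hcz := one_sub_ne_zero_of_norm_lt_one (norm_mul_lt_one_of_le_of_lt hc hz)
  have hzc : 1 - z * c ≠ 0 := mul_comm c z ▸ hcz
  have h1z := one_sub_ne_zero_of_norm_lt_one hz
  have hderiv := (hasDerivAt_concaveExtremal hc hc1 hα0 hz).deriv
  rw [Pfun, (hasDerivAt_deriv_concaveExtremal hc hc1 hα0 hz).deriv, mul_div_assoc,
    mul_div_cancel_left₀ _ (hderiv ▸ powProd_ne_zero hc hz), powProdLogDeriv]
  field_simp
  ring

theorem isConcaveUnivalent_concaveExtremal (hα : 1 < α) :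
    IsConcaveUnivalent α (concaveExtremal α c) := by
  have hα0 : α ≠ 0 := (zero_lt_one.trans hα).ne'
  have hdisk {z : ℂ} (hz : z ∈ unitDisk) : ‖z‖ < 1 := mem_ball_zero_iff.1 hz
  refine ⟨fun z hz => ?_, ?_, ?_, fun z hz => ?_, fun z hz => ?_⟩
  · exact (hasDerivAt_concaveExtremal hc hc1 hα0 (hdisk hz)).differentiableAt
      |>.differentiableWithinAt
  · simp [concaveExtremal, powProd]
  · rw [(hasDerivAt_concaveExtremal hc hc1 hα0 (by simp)).deriv]
    simp [powProd]
  · rw [(hasDerivAt_concaveExtremal hc hc1 hα0 (hdisk hz)).deriv]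
    exact powProd_ne_zero hc (hdisk hz)
  · rw [pfun_concaveExtremal hc hc1 hα (hdisk hz)]
    exact re_one_add_div_one_sub_pos (norm_mul_lt_one_of_le_of_lt hc (hdisk hz))

theorem feketeSzego_two_thirds_concaveExtremal (hα : α ≠ 0) :
    iteratedDeriv 3 (concaveExtremal α c) 0 / 6
        - (2 / 3 : ℂ) * (iteratedDeriv 2 (concaveExtremal α c) 0 / 2) ^ 2
      = (α + 1 - (α - 1) * c ^ 2) / 6 := by
  rw [feketeSzego_two_thirds_eq ?_ ?_ (hasDerivAt_powProdLogDeriv_zero (α - 1) (-α - 1) c)]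
  · ring
  · filter_upwards [isOpen_ball.mem_nhds (mem_ball_self one_pos)] with z hz
    exact hasDerivAt_deriv_concaveExtremal hc hc1 hα (mem_ball_zero_iff.1 hz)
  · rw [(hasDerivAt_concaveExtremal hc hc1 hα (by simp)).deriv]
    simp [powProd]

end

theorem stmt12 (α : ℝ) (hα : 1 < α ∧ α ≤ 2) :
    ∃ f : ℂ → ℂ, IsConcaveUnivalent α f ∧
      ‖iteratedDeriv 3 f 0 / 6 - (2 / 3 : ℂ) * (iteratedDeriv 2 f 0 / 2) ^ 2‖
        = α / 3 := by
  have hI : ‖I‖ ≤ 1 := by simp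
  have hI1 : I ≠ 1 := fun h => by simpa using congrArg im h
  refine ⟨concaveExtremal α I, isConcaveUnivalent_concaveExtremal hI hI1 hα.1, ?_⟩
  rw [feketeSzego_two_thirds_concaveExtremal hI hI1 (zero_lt_one.trans hα.1).ne', I_sq,
    show ((α : ℂ) + 1 - (α - 1) * -1) / 6 = ((α / 3 : ℝ) : ℂ) by push_cast; ring, norm_real,
    Real.norm_of_nonneg (by linarith)]
end
end
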